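/- arXiv:1907.01352 — 2 statements merged into one kernel-verified Lean document; each statement's English description precedes it below -/
import Mathlib

section
/- For every n ∈ ℕ and a > 0, set ϱ_n(a) := inf over L > 0 of μ_{L,n}(a), where μ_{L,n}(a) := inf { ½ ‖V‖_{L²(Q_L)}² : V ∈ C_c^∞(Q_L), Λ_n(Q_L, V) ≥ a }. If ϱ_n(a) ∈ (0, ∞), then sup over L > 0 of sup { 2 Λ_n(Q_L, V) : V ∈ C_c^∞(Q_L), ‖V‖_{L²(Q_L)}² ≤ 1/a } = 1/ϱ_n(a). Moreover, L ↦ μ_{L,n}(a) is nonincreasing, so that ϱ_n(a) = lim_{L → ∞} μ_{L,n}(a). -/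
open MeasureTheory

/-- Coercion of a plain function `Fin d → ℝ` to a point of `EuclideanSpace ℝ (Fin d)`. -/
def toE {d : ℕ} (f : Fin d → ℝ) : EuclideanSpace ℝ (Fin d) := WithLp.toLp 2 f

/-- The closed box `y + [lo, hi]^d` in `ℝ^d`. -/
def box (d : ℕ) (y : EuclideanSpace ℝ (Fin d)) (lo hi : ℝ) : Set (EuclideanSpace ℝ (Fin d)) :=
  {x | ∀ i, x i - y i ∈ Set.Icc lo hi}

/-- The `n`-th variational eigenvalue of `Δ + ζ` with Dirichlet boundary conditions on `Γ`:
the supremum over `n`-dimensional subspaces `F` consisting of smooth functions compactly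
supported in the interior of `Γ` of the infimum of
`∫_Γ (−|∇ψ|² + ζ ψ²)` over `ψ ∈ F` with `‖ψ‖_{L²(Γ)} = 1`. -/
noncomputable def lambdaN (d n : ℕ) (Γ : Set (EuclideanSpace ℝ (Fin d)))
    (ζ : EuclideanSpace ℝ (Fin d) → ℝ) : ℝ :=
  sSup { v : ℝ | ∃ F : Submodule ℝ (EuclideanSpace ℝ (Fin d) → ℝ),
    Module.finrank ℝ F = n ∧
    (∀ ψ ∈ F, ContDiff ℝ (⊤ : ℕ∞) ψ ∧ HasCompactSupport ψ ∧ tsupport ψ ⊆ interior Γ) ∧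
    v = sInf { e : ℝ | ∃ ψ ∈ F, (∫ x in Γ, (ψ x) ^ 2) = 1 ∧
      e = ∫ x in Γ, (-‖fderiv ℝ ψ x‖ ^ 2 + ζ x * (ψ x) ^ 2) } }

/-- `μ_{L,n}(a) = inf { ½‖V‖_{L²(Q_L)}² : V ∈ C_c^∞(Q_L), Λ_n(Q_L, V) ≥ a }`, as an
extended real number (the infimum of the empty set being `+∞`). -/
noncomputable def muE (n : ℕ) (a L : ℝ) : EReal :=
  sInf {t : EReal | ∃ V : EuclideanSpace ℝ (Fin 2) → ℝ,
    ContDiff ℝ (⊤ : ℕ∞) V ∧ HasCompactSupport V ∧ tsupport V ⊆ interior (box 2 0 0 L) ∧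
    a ≤ lambdaN 2 n (box 2 0 0 L) V ∧
    t = ((1 / 2 * ∫ z in box 2 0 0 L, (V z) ^ 2 : ℝ) : EReal)}

/-- `ϱ_n(a) = inf_{L > 0} μ_{L,n}(a)`. -/
noncomputable def rhoE (n : ℕ) (a : ℝ) : EReal :=
  sInf {t : EReal | ∃ L : ℝ, 0 < L ∧ t = muE n a L}

namespace RhoAux
open scoped Pointwise

abbrev E2 : Type := EuclideanSpace ℝ (Fin 2)

lemma box_mem {L : ℝ} {x : E2} : x ∈ box 2 0 0 L ↔ ∀ i, x i ∈ Set.Icc 0 L := by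
  unfold box
  simp

lemma box_mono {L L' : ℝ} (h : L ≤ L') : box 2 0 0 L ⊆ box 2 0 0 L' := by
  intro x hx
  rw [box_mem] at hx ⊢
  exact fun i => ⟨(hx i).1, (hx i).2.trans h⟩

lemma setIntegral_box {L : ℝ} {f : E2 → ℝ} {K : Set E2} (hK : K ⊆ box 2 0 0 L)
    (h0 : ∀ x ∉ K, f x = 0) : ∫ x in box 2 0 0 L, f x = ∫ x, f x :=
  setIntegral_eq_integral_of_forall_compl_eq_zero fun x hx => h0 x (fun hxK => hx (hK hxK))

lemma fderiv_zero_nmem {ψ : E2 → ℝ} {x : E2} (h : x ∉ tsupport ψ) : fderiv ℝ ψ x = 0 :=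
  Function.notMem_support.mp (fun hs => h (support_fderiv_subset ℝ hs))

lemma smul_mem_box_iff {σ L : ℝ} (hσ : 0 < σ) {x : E2} :
    σ • x ∈ box 2 0 0 L ↔ x ∈ box 2 0 0 (L / σ) := by
  rw [box_mem, box_mem]
  refine forall_congr' fun i => ?_
  have : (σ • x) i = σ * x i := rfl
  rw [this, Set.mem_Icc, Set.mem_Icc, le_div_iff₀ hσ, mul_nonneg_iff_of_pos_left hσ, mul_comm]

lemma integral_comp_smul2 (f : E2 → ℝ) {σ : ℝ} (hσ : 0 < σ) :
    ∫ x : E2, f (σ • x) = (σ ^ 2)⁻¹ * ∫ x, f x := by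
  rw [MeasureTheory.Measure.integral_comp_smul volume f σ]
  have : Module.finrank ℝ E2 = 2 := finrank_euclideanSpace_fin
  rw [this, smul_eq_mul, abs_of_pos (by positivity)]


/-- Composition with scaling, as a linear map on functions. -/
noncomputable def CopL (σ : ℝ) : (E2 → ℝ) →ₗ[ℝ] (E2 → ℝ) where
  toFun ψ := fun x => ψ (σ • x)
  map_add' _ _ := rfl
  map_smul' _ _ := rfl

lemma CopL_comp (σ τ : ℝ) (ψ : E2 → ℝ) : CopL σ (CopL τ ψ) = fun x => ψ ((τ * σ) • x) := by
  funext x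
  simp [CopL, smul_smul]

/-- Composition with scaling, as a linear equivalence on functions. -/
noncomputable def CopE (σ : ℝ) (hσ : σ ≠ 0) : (E2 → ℝ) ≃ₗ[ℝ] (E2 → ℝ) :=
  LinearEquiv.ofLinear (CopL σ) (CopL σ⁻¹)
    (by ext ψ x; simp [CopL, smul_smul, inv_mul_cancel₀ hσ])
    (by ext ψ x; simp [CopL, smul_smul, mul_inv_cancel₀ hσ])

lemma CopE_apply (σ : ℝ) (hσ : σ ≠ 0) (ψ : E2 → ℝ) :
    (CopE σ hσ) ψ = fun x => ψ (σ • x) := rfl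

/-- Admissible test function for the box of side `L`. -/
def Adm (L : ℝ) (ψ : E2 → ℝ) : Prop :=
  ContDiff ℝ (⊤ : ℕ∞) ψ ∧ HasCompactSupport ψ ∧ tsupport ψ ⊆ interior (box 2 0 0 L)

/-- scaling homeomorphism -/
noncomputable def Hσ (σ : ℝ) (hσ : σ ≠ 0) : E2 ≃ₜ E2 := Homeomorph.smulOfNeZero σ hσ

lemma Hσ_apply (σ : ℝ) (hσ : σ ≠ 0) (x : E2) : Hσ σ hσ x = σ • x := rfl

lemma tsupport_comp (σ : ℝ) (hσ : σ ≠ 0) (ψ : E2 → ℝ) :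
    tsupport (fun x => ψ (σ • x)) = (fun x : E2 => σ • x) ⁻¹' tsupport ψ := by
  have h1 : Function.support (fun x => ψ (σ • x)) =
      (fun x : E2 => σ • x) ⁻¹' Function.support ψ := rfl
  have h2 : (fun x : E2 => σ • x) = ⇑(Hσ σ hσ) := rfl
  rw [tsupport, h1, h2, ← (Hσ σ hσ).preimage_closure]
  rfl

end RhoAux

namespace RhoAux
open scoped Pointwise

lemma interior_box_preimage {σ L : ℝ} (hσ : 0 < σ) :
    interior (box 2 0 0 (L / σ)) = (fun x : E2 => σ • x) ⁻¹' interior (box 2 0 0 L) := by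
  have h2 : (fun x : E2 => σ • x) = ⇑(Hσ σ hσ.ne') := rfl
  have hpre : (fun x : E2 => σ • x) ⁻¹' (box 2 0 0 L) = box 2 0 0 (L / σ) :=
    Set.ext fun x => smul_mem_box_iff hσ
  rw [h2, (Hσ σ hσ.ne').preimage_interior, ← h2, hpre]

lemma Adm.comp {σ L : ℝ} (hσ : 0 < σ) {ψ : E2 → ℝ} (h : Adm L ψ) :
    Adm (L / σ) (fun x => ψ (σ • x)) := by
  obtain ⟨h1, h2, h3⟩ := h
  refine ⟨h1.comp (contDiff_const_smul σ), ?_, ?_⟩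
  · rw [hasCompactSupport_def, ← tsupport, tsupport_comp σ hσ.ne' ψ]
    have : (fun x : E2 => σ • x) ⁻¹' tsupport ψ = (Hσ σ hσ.ne').symm '' tsupport ψ :=
      ((Hσ σ hσ.ne').toEquiv.symm.image_eq_preimage_symm _).symm
    rw [this]
    exact (h2.image (Hσ σ hσ.ne').symm.continuous)
  · rw [tsupport_comp σ hσ.ne' ψ, interior_box_preimage hσ]
    exact Set.preimage_mono h3

lemma norm_fderiv_comp {ψ : E2 → ℝ} (hψ : ContDiff ℝ (⊤ : ℕ∞) ψ) {σ : ℝ} (hσ : 0 < σ) (x : E2) :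
    ‖fderiv ℝ (fun y => ψ (σ • y)) x‖ = σ * ‖fderiv ℝ ψ (σ • x)‖ := by
  have h1 : HasFDerivAt (fun y : E2 => σ • y) (σ • ContinuousLinearMap.id ℝ E2) x := by
    exact ((σ • ContinuousLinearMap.id ℝ E2).hasFDerivAt (x := x))
  have h2 : HasFDerivAt ψ (fderiv ℝ ψ (σ • x)) (σ • x) :=
    (hψ.differentiable (by simp) (σ • x)).hasFDerivAt
  have h3 : HasFDerivAt (fun y : E2 => ψ (σ • y))
      ((fderiv ℝ ψ (σ • x)).comp (σ • ContinuousLinearMap.id ℝ E2)) x := h2.comp x h1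
  rw [h3.fderiv, ContinuousLinearMap.comp_smul, ContinuousLinearMap.comp_id, norm_smul,
    Real.norm_eq_abs, abs_of_pos hσ]


/-- The integrand of the quadratic form. -/
noncomputable def gI (V ψ : E2 → ℝ) (x : E2) : ℝ := -‖fderiv ℝ ψ x‖ ^ 2 + V x * (ψ x) ^ 2

lemma int_sq_box {L : ℝ} {ψ : E2 → ℝ} (hs : tsupport ψ ⊆ interior (box 2 0 0 L)) :
    ∫ x in box 2 0 0 L, (ψ x) ^ 2 = ∫ x, (ψ x) ^ 2 :=
  setIntegral_box (hs.trans interior_subset) (fun x hx => by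
    rw [image_eq_zero_of_notMem_tsupport hx]; ring)

lemma gI_zero {V ψ : E2 → ℝ} {x : E2} (hx : x ∉ tsupport ψ) : gI V ψ x = 0 := by
  rw [gI, image_eq_zero_of_notMem_tsupport hx, fderiv_zero_nmem hx]
  simp

lemma int_gI_box {L : ℝ} {V ψ : E2 → ℝ} (hs : tsupport ψ ⊆ interior (box 2 0 0 L)) :
    ∫ x in box 2 0 0 L, gI V ψ x = ∫ x, gI V ψ x :=
  setIntegral_box (hs.trans interior_subset) (fun _ hx => gI_zero hx)

lemma preimage_tsupport_subset {σ L : ℝ} (hσ : 0 < σ) {ψ : E2 → ℝ}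
    (hs : tsupport ψ ⊆ interior (box 2 0 0 L)) :
    (fun x : E2 => σ • x) ⁻¹' tsupport ψ ⊆ box 2 0 0 (L / σ) := fun x hx =>
  (smul_mem_box_iff hσ).mp (interior_subset (hs hx))

lemma int_sq_comp {σ L : ℝ} (hσ : 0 < σ) {ψ : E2 → ℝ}
    (hs : tsupport ψ ⊆ interior (box 2 0 0 L)) :
    ∫ x in box 2 0 0 (L / σ), (ψ (σ • x)) ^ 2 = (σ ^ 2)⁻¹ * ∫ x in box 2 0 0 L, (ψ x) ^ 2 := by
  rw [setIntegral_box (preimage_tsupport_subset hσ hs)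
      (fun x hx => by rw [image_eq_zero_of_notMem_tsupport hx]; ring),
    integral_comp_smul2 (fun y => (ψ y) ^ 2) hσ, int_sq_box hs]

lemma int_gI_comp {σ L : ℝ} (hσ : 0 < σ) {ψ : E2 → ℝ} (hψ : ContDiff ℝ (⊤ : ℕ∞) ψ)
    (hs : tsupport ψ ⊆ interior (box 2 0 0 L)) (V : E2 → ℝ) :
    ∫ x in box 2 0 0 (L / σ),
        (-‖fderiv ℝ (fun y => ψ (σ • y)) x‖ ^ 2 + (σ ^ 2 * V (σ • x)) * (ψ (σ • x)) ^ 2)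
      = ∫ x in box 2 0 0 L, gI V ψ x := by
  have hpt : ∀ x : E2,
      (-‖fderiv ℝ (fun y => ψ (σ • y)) x‖ ^ 2 + (σ ^ 2 * V (σ • x)) * (ψ (σ • x)) ^ 2)
        = σ ^ 2 * gI V ψ (σ • x) := by
    intro x
    rw [norm_fderiv_comp hψ hσ x, gI]
    ring
  calc ∫ x in box 2 0 0 (L / σ),
        (-‖fderiv ℝ (fun y => ψ (σ • y)) x‖ ^ 2 + (σ ^ 2 * V (σ • x)) * (ψ (σ • x)) ^ 2)
      = ∫ x in box 2 0 0 (L / σ), σ ^ 2 * gI V ψ (σ • x) :=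
        integral_congr_ae (Filter.Eventually.of_forall fun x => hpt x)
    _ = ∫ x : E2, σ ^ 2 * gI V ψ (σ • x) :=
        setIntegral_box (preimage_tsupport_subset hσ hs)
          (fun x hx => by rw [gI_zero hx]; ring)
    _ = σ ^ 2 * ∫ x : E2, gI V ψ (σ • x) := integral_const_mul _ _
    _ = σ ^ 2 * ((σ ^ 2)⁻¹ * ∫ x, gI V ψ x) := by rw [integral_comp_smul2 (gI V ψ) hσ]
    _ = ∫ x, gI V ψ x := by field_simp
    _ = ∫ x in box 2 0 0 L, gI V ψ x := (int_gI_box hs).symm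


noncomputable def innerS (L : ℝ) (V : E2 → ℝ) (F : Submodule ℝ (E2 → ℝ)) : Set ℝ :=
  { e : ℝ | ∃ ψ ∈ F, (∫ x in box 2 0 0 L, (ψ x) ^ 2) = 1 ∧
      e = ∫ x in box 2 0 0 L, (-‖fderiv ℝ ψ x‖ ^ 2 + V x * (ψ x) ^ 2) }

noncomputable def lamSet (n : ℕ) (L : ℝ) (V : E2 → ℝ) : Set ℝ :=
  { v : ℝ | ∃ F : Submodule ℝ (E2 → ℝ),
    Module.finrank ℝ F = n ∧
    (∀ ψ ∈ F, ContDiff ℝ (⊤ : ℕ∞) ψ ∧ HasCompactSupport ψ ∧ tsupport ψ ⊆ interior (box 2 0 0 L)) ∧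
    v = sInf (innerS L V F) }

lemma lambdaN_def (n : ℕ) (L : ℝ) (V : E2 → ℝ) :
    lambdaN 2 n (box 2 0 0 L) V = sSup (lamSet n L V) := rfl

lemma innerS_comp_subset {σ L : ℝ} (hσ : 0 < σ) {V : E2 → ℝ} {F : Submodule ℝ (E2 → ℝ)}
    (hF : ∀ ψ ∈ F, Adm L ψ) :
    innerS (L / σ) (fun x => σ ^ 2 * V (σ • x)) (F.map (CopE σ hσ.ne').toLinearMap)
      ⊆ (σ ^ 2) • innerS L V F := by
  rintro e' ⟨φ, hφmem, hφnorm, rfl⟩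
  obtain ⟨ψ₀, hψ₀F, rfl⟩ := Submodule.mem_map.mp hφmem
  obtain ⟨hψ₀cd, hψ₀cs, hψ₀s⟩ := hF ψ₀ hψ₀F
  have hσ2 : (σ : ℝ) ^ 2 ≠ 0 := by positivity
  -- normalization
  have hφnorm' : (∫ x in box 2 0 0 (L / σ), (ψ₀ (σ • x)) ^ 2) = 1 := hφnorm
  rw [int_sq_comp hσ hψ₀s] at hφnorm'
  have hm : (∫ x in box 2 0 0 L, (ψ₀ x) ^ 2) = σ ^ 2 := by
    field_simp at hφnorm'
    linarith
  set ψ : E2 → ℝ := σ⁻¹ • ψ₀ with hψdef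
  have hψF : ψ ∈ F := F.smul_mem _ hψ₀F
  have hnorm : (∫ x in box 2 0 0 L, (ψ x) ^ 2) = 1 := by
    have hpt : ∀ x : E2, (ψ x) ^ 2 = (σ⁻¹) ^ 2 * (ψ₀ x) ^ 2 := fun x => by
      simp only [hψdef, Pi.smul_apply, smul_eq_mul]; ring
    rw [integral_congr_ae (Filter.Eventually.of_forall hpt), integral_const_mul, hm]
    field_simp
  have hD : (∫ x in box 2 0 0 (L / σ),
        (-‖fderiv ℝ ((CopE σ hσ.ne').toLinearMap ψ₀) x‖ ^ 2 +
          (fun x => σ ^ 2 * V (σ • x)) x * (((CopE σ hσ.ne').toLinearMap ψ₀) x) ^ 2))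
      = ∫ x in box 2 0 0 L, gI V ψ₀ x := int_gI_comp hσ hψ₀cd hψ₀s V
  have hE : (∫ x in box 2 0 0 L, (-‖fderiv ℝ ψ x‖ ^ 2 + V x * (ψ x) ^ 2))
      = (σ⁻¹) ^ 2 * ∫ x in box 2 0 0 L, gI V ψ₀ x := by
    have hpt : ∀ x : E2, (-‖fderiv ℝ ψ x‖ ^ 2 + V x * (ψ x) ^ 2)
        = (σ⁻¹) ^ 2 * gI V ψ₀ x := by
      intro x
      have hd : fderiv ℝ ψ x = σ⁻¹ • fderiv ℝ ψ₀ x := by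
        rw [hψdef]
        exact fderiv_fun_const_smul (hψ₀cd.differentiable (by simp) x) σ⁻¹
      have hv : ψ x = σ⁻¹ * ψ₀ x := rfl
      rw [hd, hv, norm_smul, Real.norm_eq_abs, abs_of_pos (by positivity : (0:ℝ) < σ⁻¹), gI]
      ring
    rw [integral_congr_ae (Filter.Eventually.of_forall hpt), integral_const_mul]
  refine Set.mem_smul_set.mpr
    ⟨∫ x in box 2 0 0 L, (-‖fderiv ℝ ψ x‖ ^ 2 + V x * (ψ x) ^ 2), ⟨ψ, hψF, hnorm, rfl⟩, ?_⟩
  rw [hE, hD, smul_eq_mul]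
  field_simp


lemma map_CopE_CopE {σ : ℝ} (hσ : σ ≠ 0) (F : Submodule ℝ (E2 → ℝ)) :
    (F.map (CopE σ hσ).toLinearMap).map (CopE σ⁻¹ (inv_ne_zero hσ)).toLinearMap = F := by
  rw [← Submodule.map_comp]
  have hcomp : (CopE σ⁻¹ (inv_ne_zero hσ)).toLinearMap ∘ₗ (CopE σ hσ).toLinearMap
      = LinearMap.id := by
    refine LinearMap.ext fun ψ => funext fun x => ?_
    show ψ (σ • σ⁻¹ • x) = ψ x
    rw [smul_smul, mul_inv_cancel₀ hσ, one_smul]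
  rw [hcomp, Submodule.map_id]

lemma adm_map {σ L : ℝ} (hσ : 0 < σ) {F : Submodule ℝ (E2 → ℝ)} (hF : ∀ ψ ∈ F, Adm L ψ) :
    ∀ φ ∈ F.map (CopE σ hσ.ne').toLinearMap, Adm (L / σ) φ := by
  rintro φ ⟨ψ, hψ, rfl⟩
  exact (hF ψ hψ).comp hσ

lemma innerS_comp_subset' {σ L L' : ℝ} {V W : E2 → ℝ} {F G : Submodule ℝ (E2 → ℝ)}
    (hσ : 0 < σ) (hF : ∀ ψ ∈ F, Adm L ψ) (hW : ∀ x, W x = σ ^ 2 * V (σ • x))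
    (hL' : L' = L / σ) (hG : G = F.map (CopE σ hσ.ne').toLinearMap) :
    innerS L' W G ⊆ (σ ^ 2) • innerS L V F := by
  have hWeq : W = fun x => σ ^ 2 * V (σ • x) := funext hW
  subst hWeq hL' hG
  exact innerS_comp_subset hσ hF

lemma innerS_comp_eq {σ L : ℝ} (hσ : 0 < σ) {V : E2 → ℝ} {F : Submodule ℝ (E2 → ℝ)}
    (hF : ∀ ψ ∈ F, Adm L ψ) :
    innerS (L / σ) (fun x => σ ^ 2 * V (σ • x)) (F.map (CopE σ hσ.ne').toLinearMap)
      = (σ ^ 2) • innerS L V F := by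
  have hσ' : 0 < σ⁻¹ := by positivity
  apply subset_antisymm (innerS_comp_subset hσ hF)
  have h2 : innerS L V F ⊆ (σ⁻¹ ^ 2) •
      innerS (L / σ) (fun x => σ ^ 2 * V (σ • x)) (F.map (CopE σ hσ.ne').toLinearMap) := by
    refine innerS_comp_subset' hσ' (adm_map hσ hF) (fun x => ?_) (by field_simp) ?_
    · rw [smul_smul, mul_inv_cancel₀ hσ.ne', one_smul]
      field_simp
    · have := (map_CopE_CopE hσ.ne' F).symm
      convert this using 3
    
  intro e he
  obtain ⟨e₀, he₀, rfl⟩ := Set.mem_smul_set.mp he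
  obtain ⟨e₁, he₁, rfl⟩ := Set.mem_smul_set.mp (h2 he₀)
  rw [smul_smul]
  have : σ ^ 2 * σ⁻¹ ^ 2 = 1 := by field_simp
  rw [this, one_smul]
  exact he₁

lemma lamSet_comp_subset {σ L : ℝ} (hσ : 0 < σ) (n : ℕ) (V : E2 → ℝ) :
    (σ ^ 2) • lamSet n L V ⊆ lamSet n (L / σ) (fun x => σ ^ 2 * V (σ • x)) := by
  rintro v' hv'
  obtain ⟨v, ⟨F, hFr, hFa, rfl⟩, rfl⟩ := Set.mem_smul_set.mp hv'
  refine ⟨F.map (CopE σ hσ.ne').toLinearMap, ?_, ?_, ?_⟩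
  · exact (LinearEquiv.finrank_map_eq _ _).trans hFr
  · exact fun φ hφ => adm_map hσ hFa φ hφ
  · rw [innerS_comp_eq hσ hFa, Real.sInf_smul_of_nonneg (by positivity)]

lemma lamSet_comp_subset' {σ L L' : ℝ} {V W : E2 → ℝ} (hσ : 0 < σ) (n : ℕ)
    (hW : ∀ x, W x = σ ^ 2 * V (σ • x)) (hL' : L' = L / σ) :
    (σ ^ 2) • lamSet n L V ⊆ lamSet n L' W := by
  have hWeq : W = fun x => σ ^ 2 * V (σ • x) := funext hW
  subst hWeq hL'
  exact lamSet_comp_subset hσ n V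

lemma lamSet_comp_eq {σ L : ℝ} (hσ : 0 < σ) (n : ℕ) (V : E2 → ℝ) :
    lamSet n (L / σ) (fun x => σ ^ 2 * V (σ • x)) = (σ ^ 2) • lamSet n L V := by
  have hσ' : 0 < σ⁻¹ := by positivity
  apply subset_antisymm _ (lamSet_comp_subset hσ n V)
  have h2 : (σ⁻¹ ^ 2) • lamSet n (L / σ) (fun x => σ ^ 2 * V (σ • x)) ⊆ lamSet n L V := by
    refine lamSet_comp_subset' hσ' n (fun x => ?_) (by field_simp)
    rw [smul_smul, mul_inv_cancel₀ hσ.ne', one_smul]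
    field_simp
  intro v hv
  have : v = σ ^ 2 • (σ⁻¹ ^ 2 • v) := by
    rw [smul_smul, smul_eq_mul]
    field_simp
  rw [this]
  exact Set.smul_mem_smul_set (h2 (Set.smul_mem_smul_set hv))

lemma lambdaN_scale {σ L : ℝ} (hσ : 0 < σ) (n : ℕ) (V : E2 → ℝ) :
    lambdaN 2 n (box 2 0 0 (L / σ)) (fun x => σ ^ 2 * V (σ • x))
      = σ ^ 2 * lambdaN 2 n (box 2 0 0 L) V := by
  rw [lambdaN_def, lambdaN_def, lamSet_comp_eq hσ n V,
    Real.sSup_smul_of_nonneg (by positivity), smul_eq_mul]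


lemma int_Vsq_comp {σ L : ℝ} (hσ : 0 < σ) {V : E2 → ℝ}
    (hs : tsupport V ⊆ interior (box 2 0 0 L)) :
    (∫ x in box 2 0 0 (L / σ), (σ ^ 2 * V (σ • x)) ^ 2)
      = σ ^ 2 * ∫ x in box 2 0 0 L, (V x) ^ 2 := by
  have hpt : ∀ x : E2, (σ ^ 2 * V (σ • x)) ^ 2 = σ ^ 4 * (V (σ • x)) ^ 2 := fun x => by ring
  rw [integral_congr_ae (Filter.Eventually.of_forall hpt), integral_const_mul, int_sq_comp hσ hs]
  field_simp

lemma adm_W {σ L : ℝ} (hσ : 0 < σ) {V : E2 → ℝ} (hV : Adm L V) :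
    Adm (L / σ) (fun x => σ ^ 2 * V (σ • x)) := by
  obtain ⟨h1, h2, h3⟩ := hV.comp hσ
  refine ⟨contDiff_const.mul h1, ?_, ?_⟩
  · exact (HasCompactSupport.mul_left h2 :
      HasCompactSupport ((fun _ : E2 => σ ^ 2) * fun x => V (σ • x)))
  · exact le_trans (tsupport_mul_subset_right (f := fun _ : E2 => σ ^ 2) (g := fun x => V (σ • x))) h3

lemma bddAbove_lamSet {L : ℝ} {V : E2 → ℝ} (hVc : Continuous V) (hVs : HasCompactSupport V)
    (n : ℕ) : BddAbove (lamSet n L V) := by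
  obtain ⟨C, hC⟩ := hVc.bddAbove_range_of_hasCompactSupport hVs
  set M := max C 0 with hM
  have hVM : ∀ x, V x ≤ M := fun x => le_trans (hC ⟨x, rfl⟩) (le_max_left _ _)
  refine ⟨M, ?_⟩
  rintro v ⟨F, hFr, hFa, rfl⟩
  by_cases hne : (innerS L V F).Nonempty
  · by_cases hbb : BddBelow (innerS L V F)
    · obtain ⟨e, he⟩ := hne
      refine le_trans (csInf_le hbb he) ?_
      obtain ⟨ψ, hψF, hnorm, rfl⟩ := he
      obtain ⟨hcd, hcs, hsupp⟩ := hFa ψ hψF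
      have hfd : Continuous (fderiv ℝ ψ) := hcd.continuous_fderiv (by simp)
      have hcont : Continuous (fun x : E2 => -‖fderiv ℝ ψ x‖ ^ 2 + V x * (ψ x) ^ 2) :=
        ((hfd.norm.pow 2).neg).add (hVc.mul (hcd.continuous.pow 2))
      have hcsf : HasCompactSupport (fun x : E2 => -‖fderiv ℝ ψ x‖ ^ 2 + V x * (ψ x) ^ 2) := by
        refine HasCompactSupport.intro hcs fun x hx => ?_
        rw [image_eq_zero_of_notMem_tsupport hx, fderiv_zero_nmem hx]
        simp
      have hcsg : HasCompactSupport (fun x : E2 => M * (ψ x) ^ 2) := by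
        refine HasCompactSupport.intro hcs fun x hx => ?_
        rw [image_eq_zero_of_notMem_tsupport hx]
        ring
      have hint1 : IntegrableOn (fun x : E2 => -‖fderiv ℝ ψ x‖ ^ 2 + V x * (ψ x) ^ 2)
          (box 2 0 0 L) := (hcont.integrable_of_hasCompactSupport hcsf).integrableOn
      have hint2 : IntegrableOn (fun x : E2 => M * (ψ x) ^ 2) (box 2 0 0 L) :=
        (((continuous_const.mul (hcd.continuous.pow 2))).integrable_of_hasCompactSupport
          hcsg).integrableOn
      have hle : (∫ x in box 2 0 0 L, (-‖fderiv ℝ ψ x‖ ^ 2 + V x * (ψ x) ^ 2))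
          ≤ ∫ x in box 2 0 0 L, M * (ψ x) ^ 2 := by
        refine integral_mono hint1 hint2 fun x => ?_
        have h1 : V x * (ψ x) ^ 2 ≤ M * (ψ x) ^ 2 :=
          mul_le_mul_of_nonneg_right (hVM x) (sq_nonneg _)
        have h2 : (0:ℝ) ≤ ‖fderiv ℝ ψ x‖ ^ 2 := sq_nonneg _
        simp only []
        linarith
      calc (∫ x in box 2 0 0 L, (-‖fderiv ℝ ψ x‖ ^ 2 + V x * (ψ x) ^ 2))
          ≤ ∫ x in box 2 0 0 L, M * (ψ x) ^ 2 := hle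
        _ = M * ∫ x in box 2 0 0 L, (ψ x) ^ 2 := integral_const_mul _ _
        _ = M := by rw [hnorm, mul_one]
    · rw [Real.sInf_of_not_bddBelow hbb]
      exact le_max_right _ _
  · rw [Set.not_nonempty_iff_eq_empty.mp hne, Real.sInf_empty]
    exact le_max_right _ _

lemma innerS_mono_eq {L L' : ℝ} (h : L ≤ L') {V : E2 → ℝ} {F : Submodule ℝ (E2 → ℝ)}
    (hFa : ∀ ψ ∈ F, Adm L ψ) : innerS L' V F = innerS L V F := by
  have key : ∀ ψ ∈ F,
      ((∫ x in box 2 0 0 L', (ψ x) ^ 2) = ∫ x in box 2 0 0 L, (ψ x) ^ 2) ∧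
      ((∫ x in box 2 0 0 L', (-‖fderiv ℝ ψ x‖ ^ 2 + V x * (ψ x) ^ 2))
        = ∫ x in box 2 0 0 L, (-‖fderiv ℝ ψ x‖ ^ 2 + V x * (ψ x) ^ 2)) := by
    intro ψ hψ
    have hs := (hFa ψ hψ).2.2
    have hs' : tsupport ψ ⊆ interior (box 2 0 0 L') := hs.trans (interior_mono (box_mono h))
    constructor
    · rw [int_sq_box hs, int_sq_box hs']
    · exact (int_gI_box (V := V) hs').trans (int_gI_box (V := V) hs).symm
  ext e
  constructor <;> rintro ⟨ψ, hψF, hnorm, rfl⟩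
  · exact ⟨ψ, hψF, by rw [← (key ψ hψF).1]; exact hnorm, ((key ψ hψF).2)⟩
  · exact ⟨ψ, hψF, by rw [(key ψ hψF).1]; exact hnorm, ((key ψ hψF).2).symm⟩

lemma lamSet_mono {L L' : ℝ} (h : L ≤ L') (n : ℕ) (V : E2 → ℝ) :
    lamSet n L V ⊆ lamSet n L' V := by
  rintro v ⟨F, hFr, hFa, rfl⟩
  refine ⟨F, hFr, fun ψ hψ => ?_, by rw [innerS_mono_eq h hFa]⟩
  obtain ⟨h1, h2, h3⟩ := hFa ψ hψ
  exact ⟨h1, h2, h3.trans (interior_mono (box_mono h))⟩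

lemma lambdaN_le_mono {n : ℕ} {a L L' : ℝ} (ha : 0 < a) {V : E2 → ℝ}
    (hVc : Continuous V) (hVs : HasCompactSupport V)
    (haL : a ≤ lambdaN 2 n (box 2 0 0 L) V) (h : L ≤ L') :
    a ≤ lambdaN 2 n (box 2 0 0 L') V := by
  rw [lambdaN_def] at haL ⊢
  have hne : (lamSet n L V).Nonempty := by
    by_contra hemp
    rw [Set.not_nonempty_iff_eq_empty] at hemp
    rw [hemp, Real.sSup_empty] at haL
    linarith
  exact haL.trans (csSup_le_csSup (bddAbove_lamSet hVc hVs n) hne (lamSet_mono h n V))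

end RhoAux

namespace RhoAux

lemma muE_anti {n : ℕ} {a : ℝ} (ha : 0 < a) {L L' : ℝ} (h : L ≤ L') :
    muE n a L' ≤ muE n a L := by
  apply sInf_le_sInf
  rintro t ⟨V, hVc, hVs, hVsupp, hVlam, rfl⟩
  have hs' : tsupport V ⊆ interior (box 2 0 0 L') := hVsupp.trans (interior_mono (box_mono h))
  refine ⟨V, hVc, hVs, hs', lambdaN_le_mono ha hVc.continuous hVs hVlam h, ?_⟩
  have hint : (∫ z in box 2 0 0 L', (V z) ^ 2) = ∫ z in box 2 0 0 L, (V z) ^ 2 := by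
    rw [int_sq_box hs', int_sq_box hVsupp]
  rw [hint]

end RhoAux

/-- If `ϱ_n(a) ∈ (0,∞)` then
`sup_{L>0} sup { 2 Λ_n(Q_L,V) : V ∈ C_c^∞(Q_L), ‖V‖_{L²}² ≤ 1/a } = 1/ϱ_n(a)`;
moreover `L ↦ μ_{L,n}(a)` is nonincreasing, so that `ϱ_n(a) = lim_{L → ∞} μ_{L,n}(a)`. -/
theorem rhoE_duality_and_monotone (n : ℕ) (hn : 1 ≤ n) (a : ℝ) (ha : 0 < a)
    (ρ : ℝ) (hρpos : 0 < ρ) (hρ : rhoE n a = (ρ : EReal)) :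
    sSup {t : EReal | ∃ L : ℝ, 0 < L ∧ ∃ V : EuclideanSpace ℝ (Fin 2) → ℝ,
        ContDiff ℝ (⊤ : ℕ∞) V ∧ HasCompactSupport V ∧ tsupport V ⊆ interior (box 2 0 0 L) ∧
        (∫ z in box 2 0 0 L, (V z) ^ 2) ≤ 1 / a ∧
        t = ((2 * lambdaN 2 n (box 2 0 0 L) V : ℝ) : EReal)} = ((1 / ρ : ℝ) : EReal) ∧
    (∀ L L' : ℝ, 0 < L → L ≤ L' → muE n a L' ≤ muE n a L) ∧
    Filter.Tendsto (fun L => muE n a L) Filter.atTop (nhds (rhoE n a)) := by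
  have hmono : ∀ L L' : ℝ, L ≤ L' → muE n a L' ≤ muE n a L :=
    fun L L' h => RhoAux.muE_anti ha h
  refine ⟨?_, fun L L' _ h => hmono L L' h, ?_⟩
  · -- duality
    set D := {t : EReal | ∃ L : ℝ, 0 < L ∧ ∃ V : EuclideanSpace ℝ (Fin 2) → ℝ,
        ContDiff ℝ (⊤ : ℕ∞) V ∧ HasCompactSupport V ∧ tsupport V ⊆ interior (box 2 0 0 L) ∧
        (∫ z in box 2 0 0 L, (V z) ^ 2) ≤ 1 / a ∧
        t = ((2 * lambdaN 2 n (box 2 0 0 L) V : ℝ) : EReal)} with hD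
    apply le_antisymm
    · -- sSup D ≤ 1/ρ
      apply sSup_le
      rintro t ⟨L, hL, V, hVc, hVs, hVsupp, hVnorm, rfl⟩
      by_cases hΛpos : 0 < lambdaN 2 n (box 2 0 0 L) V
      case neg =>
        refine EReal.coe_le_coe_iff.mpr ?_
        have h1ρ : (0:ℝ) < 1 / ρ := by positivity
        push_neg at hΛpos
        nlinarith
      case pos =>
        set Λ := lambdaN 2 n (box 2 0 0 L) V with hΛdef
        set σ := Real.sqrt (a / Λ) with hσdef
        have hσ : 0 < σ := Real.sqrt_pos.mpr (by positivity)
        have hσ2 : σ ^ 2 = a / Λ := Real.sq_sqrt (by positivity)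
        have hlam' : lambdaN 2 n (box 2 0 0 (L / σ)) (fun x => σ ^ 2 * V (σ • x)) = a := by
          rw [RhoAux.lambdaN_scale hσ, ← hΛdef, hσ2]
          field_simp
        obtain ⟨hW1, hW2, hW3⟩ := RhoAux.adm_W hσ (V := V) ⟨hVc, hVs, hVsupp⟩
        have h1 : muE n a (L / σ) ≤
            (((1:ℝ) / 2 * ∫ z in box 2 0 0 (L / σ), (σ ^ 2 * V (σ • z)) ^ 2 : ℝ) : EReal) := by
          apply sInf_le
          exact ⟨fun x => σ ^ 2 * V (σ • x), hW1, hW2, hW3, le_of_eq hlam'.symm, rfl⟩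
        have h2 : rhoE n a ≤ muE n a (L / σ) := sInf_le ⟨L / σ, by positivity, rfl⟩
        have h3 := hρ ▸ (h2.trans h1)
        have h4 : ρ ≤ 1 / 2 * ∫ z in box 2 0 0 (L / σ), (σ ^ 2 * V (σ • z)) ^ 2 :=
          EReal.coe_le_coe_iff.mp h3
        rw [RhoAux.int_Vsq_comp hσ hVsupp, hσ2] at h4
        refine EReal.coe_le_coe_iff.mpr ?_
        have hd : a / Λ * (1 / a) = 1 / Λ := by
          field_simp
        have h5 : a / Λ * (∫ z in box 2 0 0 L, (V z) ^ 2) ≤ 1 / Λ := by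
          rw [← hd]
          exact mul_le_mul_of_nonneg_left hVnorm (by positivity)
        have h6 : ρ ≤ 1 / 2 * (1 / Λ) := by linarith
        have h7 : 2 * Λ * ρ ≤ 2 * Λ * (1 / 2 * (1 / Λ)) :=
          mul_le_mul_of_nonneg_left h6 (by positivity)
        have h8 : 2 * Λ * (1 / 2 * (1 / Λ)) = 1 := by field_simp
        rw [le_div_iff₀ hρpos]
        linarith
    · -- 1/ρ ≤ sSup D
      have key : ∀ ε : ℝ, 0 < ε → ((1 / (ρ + ε) : ℝ) : EReal) ≤ sSup D := by
        intro ε hε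
        have h1 : rhoE n a < ((ρ + ε : ℝ) : EReal) := by
          rw [hρ]
          exact EReal.coe_lt_coe_iff.mpr (by linarith)
        obtain ⟨t, ht, htlt⟩ := sInf_lt_iff.mp h1
        obtain ⟨L, hL, rfl⟩ := ht
        obtain ⟨t', ht', ht'lt⟩ := sInf_lt_iff.mp htlt
        obtain ⟨V, hVc, hVs, hVsupp, hVlam, rfl⟩ := ht'
        set m := 1 / 2 * ∫ z in box 2 0 0 L, (V z) ^ 2 with hm
        have hmlt : m < ρ + ε := EReal.coe_lt_coe_iff.mp ht'lt
        have hρm : (ρ:ℝ) ≤ m := by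
          have hh : rhoE n a ≤ ((m : ℝ) : EReal) := by
            refine le_trans (sInf_le ⟨L, hL, rfl⟩) (sInf_le ?_)
            exact ⟨V, hVc, hVs, hVsupp, hVlam, rfl⟩
          rw [hρ] at hh
          exact EReal.coe_le_coe_iff.mp hh
        have hmpos : 0 < m := lt_of_lt_of_le hρpos hρm
        set σ := Real.sqrt (1 / (2 * a * m)) with hσdef
        have hσ : 0 < σ := Real.sqrt_pos.mpr (by positivity)
        have hσ2 : σ ^ 2 = 1 / (2 * a * m) := Real.sq_sqrt (by positivity)
        obtain ⟨hW1, hW2, hW3⟩ := RhoAux.adm_W hσ (V := V) ⟨hVc, hVs, hVsupp⟩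
        have hlam' : lambdaN 2 n (box 2 0 0 (L / σ)) (fun x => σ ^ 2 * V (σ • x))
            = σ ^ 2 * lambdaN 2 n (box 2 0 0 L) V := RhoAux.lambdaN_scale hσ n V
        have hInorm : (∫ z in box 2 0 0 (L / σ), (σ ^ 2 * V (σ • z)) ^ 2) ≤ 1 / a := by
          rw [RhoAux.int_Vsq_comp hσ hVsupp, hσ2]
          have h2m : (∫ z in box 2 0 0 L, (V z) ^ 2) = 2 * m := by rw [hm]; ring
          rw [h2m]
          have : 1 / (2 * a * m) * (2 * m) = 1 / a := by field_simp
          rw [this]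
        have hmem : ((2 * lambdaN 2 n (box 2 0 0 (L / σ)) (fun x => σ ^ 2 * V (σ • x)) : ℝ) :
            EReal) ∈ D := by
          rw [hD]
          exact ⟨L / σ, by positivity, fun x => σ ^ 2 * V (σ • x), hW1, hW2, hW3, hInorm, rfl⟩
        refine le_trans ?_ (le_sSup hmem)
        refine EReal.coe_le_coe_iff.mpr ?_
        rw [hlam', hσ2]
        calc 1 / (ρ + ε) ≤ 1 / m := one_div_le_one_div_of_le hmpos (le_of_lt hmlt)
          _ = 2 * (1 / (2 * a * m) * a) := by field_simp
          _ ≤ 2 * (1 / (2 * a * m) * lambdaN 2 n (box 2 0 0 L) V) := by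
              have hmul := mul_le_mul_of_nonneg_left hVlam
                (le_of_lt (show (0:ℝ) < 1 / (2 * a * m) by positivity))
              linarith
      by_contra hcon
      push_neg at hcon
      have hge1 : ((1 / (ρ + 1) : ℝ) : EReal) ≤ sSup D := key 1 one_pos
      have hstop : sSup D ≠ ⊤ := ne_top_of_lt hcon
      have hsbot : sSup D ≠ ⊥ := by
        intro hb
        rw [hb, le_bot_iff] at hge1
        exact EReal.coe_ne_bot _ hge1
      set s := (sSup D).toReal with hsdef
      have hcoe : sSup D = ((s : ℝ) : EReal) := (EReal.coe_toReal hstop hsbot).symm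
      rw [hcoe] at hcon hge1 key
      have hslt : s < 1 / ρ := EReal.coe_lt_coe_iff.mp hcon
      have hsge : 1 / (ρ + 1) ≤ s := EReal.coe_le_coe_iff.mp hge1
      have hspos : 0 < s := lt_of_lt_of_le (by positivity) hsge
      have hkey' : ∀ ε : ℝ, 0 < ε → 1 / s ≤ ρ + ε := by
        intro ε hε
        have h1 := EReal.coe_le_coe_iff.mp (key ε hε)
        exact (one_div_le hspos (by positivity)).mpr h1
      have h1sρ : 1 / s ≤ ρ := by
        by_contra hco
        push_neg at hco
        have h2 := hkey' ((1 / s - ρ) / 2) (by linarith)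
        linarith
      have : 1 / ρ ≤ s := (one_div_le hρpos hspos).mpr h1sρ
      linarith
  · -- tendsto
    set g : ℝ → EReal := fun L => muE n a (max L 1) with hg
    have hganti : Antitone g := fun L1 L2 h => hmono _ _ (max_le_max h le_rfl)
    have hgi : ⨅ L, g L = rhoE n a := by
      apply le_antisymm
      · refine le_sInf ?_
        rintro t ⟨L, hL, rfl⟩
        exact (iInf_le g L).trans (hmono _ _ (le_max_left L 1))
      · refine le_iInf fun L => ?_
        exact sInf_le ⟨max L 1, lt_of_lt_of_le one_pos (le_max_right L 1), rfl⟩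
    have hgt : Filter.Tendsto g Filter.atTop (nhds (rhoE n a)) := hgi ▸ tendsto_atTop_iInf hganti
    refine hgt.congr' ?_
    filter_upwards [Filter.eventually_ge_atTop (1:ℝ)] with L hL
    rw [hg]
    simp [max_eq_left hL]
end

section
/- Let γ, θ ∈ (0,1) with γ + θ > 1. There exists a constant C > 0 such that for all b > 0 and all u ∈ ℝ: ∫₀^∞ (b + |x − u|)^{−γ} (b + x)^{−θ} dx ≤ C (b + |u|)^{1−γ−θ}. Consequently there exists C' > 0 such that for all b > 0 and all u, v ∈ ℝ: ∫_ℝ (b + |x − u|)^{−γ} (b + |x − v|)^{−θ} dx ≤ C' (b + |u − v|)^{1−γ−θ}. -/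
/-!
Write `A = b + |x - u|`, `B = b + |x - v|` and `R = b + |u - v|`. Since `A + B ≥ R`, the larger of
`A, B` is at least `R / 2`; if it is `A`, then `A ≥ max (R / 2) B` and so
`A ^ (-γ) * B ^ (-θ) ≤ max (R / 2) B ^ (-γ) * B ^ (-θ)`, and symmetrically otherwise. The integrand
is thus dominated by two broken power laws `t ↦ max c t ^ (-α) * t ^ (-β)` with `c = R / 2`,
evaluated at `B` and at `A`. Such a profile is integrable on `(0, ∞)` because `β < 1` (near `0`)
and `α + β > 1` (near `∞`), with integral `(1 / (1 - β) + 1 / (α + β - 1)) * c ^ (1 - α - β)`.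
The half-line estimate is the case `v = 0` of the full-line one.
-/

open MeasureTheory Set

open scoped ENNReal

theorem lintegral_Ioc_zero_rpow {c r : ℝ} (hc : 0 ≤ c) (hr : -1 < r) :
    ∫⁻ t in Ioc 0 c, ENNReal.ofReal (t ^ r) = ENNReal.ofReal (c ^ (r + 1) / (r + 1)) := by
  rw [← ofReal_integral_eq_lintegral_ofReal (intervalIntegral.intervalIntegrable_rpow' hr).1
      ((ae_restrict_mem measurableSet_Ioc).mono fun t ht => Real.rpow_nonneg ht.1.le r),
    ← intervalIntegral.integral_of_le hc, integral_rpow (Or.inl hr),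
    Real.zero_rpow (by linarith), sub_zero]

theorem lintegral_Ioi_rpow {c r : ℝ} (hc : 0 < c) (hr : r < -1) :
    ∫⁻ t in Ioi c, ENNReal.ofReal (t ^ r) = ENNReal.ofReal (-c ^ (r + 1) / (r + 1)) := by
  rw [← ofReal_integral_eq_lintegral_ofReal (integrableOn_Ioi_rpow_of_lt hr hc)
      ((ae_restrict_mem measurableSet_Ioi).mono fun t ht => Real.rpow_nonneg (hc.trans ht).le r),
    integral_Ioi_rpow_of_lt hr hc]

noncomputable def brokenPowerLaw (c α β t : ℝ) : ℝ := max c t ^ (-α) * t ^ (-β)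

theorem brokenPowerLaw_nonneg {c α β t : ℝ} (ht : 0 ≤ t) : 0 ≤ brokenPowerLaw c α β t :=
  mul_nonneg (Real.rpow_nonneg (ht.trans (le_max_right c t)) _) (Real.rpow_nonneg ht _)

@[fun_prop]
theorem measurable_brokenPowerLaw (c α β : ℝ) : Measurable (brokenPowerLaw c α β) := by
  unfold brokenPowerLaw; fun_prop

theorem lintegral_brokenPowerLaw {c α β : ℝ} (hc : 0 < c) (hβ : β < 1) (hαβ : 1 < α + β) :
    ∫⁻ t in Ioi 0, ENNReal.ofReal (brokenPowerLaw c α β t) =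
      ENNReal.ofReal ((1 / (1 - β) + 1 / (α + β - 1)) * c ^ (1 - (α + β))) := by
  have hlow : ∀ t ∈ Ioc 0 c, ENNReal.ofReal (brokenPowerLaw c α β t) =
      ENNReal.ofReal (c ^ (-α)) * ENNReal.ofReal (t ^ (-β)) := fun t ht => by
    rw [brokenPowerLaw, max_eq_left ht.2, ENNReal.ofReal_mul (Real.rpow_nonneg hc.le _)]
  have hhigh : ∀ t ∈ Ioi c, ENNReal.ofReal (brokenPowerLaw c α β t) =
      ENNReal.ofReal (t ^ (-(α + β))) := fun t ht => by
    rw [brokenPowerLaw, max_eq_right (le_of_lt ht), ← Real.rpow_add (hc.trans ht), neg_add]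
  rw [← Ioc_union_Ioi_eq_Ioi hc.le, lintegral_union measurableSet_Ioi (Ioc_disjoint_Ioi le_rfl),
    setLIntegral_congr_fun measurableSet_Ioc hlow, setLIntegral_congr_fun measurableSet_Ioi hhigh,
    lintegral_const_mul' _ _ ENNReal.ofReal_ne_top, lintegral_Ioc_zero_rpow hc.le (by linarith),
    lintegral_Ioi_rpow hc (by linarith), ← ENNReal.ofReal_mul (Real.rpow_nonneg hc.le _),
    ← ENNReal.ofReal_add]
  · congr 1
    rw [mul_div_assoc', ← Real.rpow_add hc, show -α + (-β + 1) = 1 - (α + β) by ring,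
      show -(α + β) + 1 = 1 - (α + β) by ring, show -β + 1 = 1 - β by ring]
    field_simp [show 1 - β ≠ 0 by linarith, show α + β - 1 ≠ 0 by linarith,
      show 1 - (α + β) ≠ 0 by linarith]
    ring
  · exact mul_nonneg (by positivity) (div_nonneg (by positivity) (by linarith))
  · exact div_nonneg_of_nonpos (neg_nonpos.2 (by positivity)) (by linarith)

theorem rpow_neg_mul_rpow_neg_le_brokenPowerLaw_add {A B c γ θ : ℝ} (hA : 0 < A) (hB : 0 < B)
    (hcAB : c ≤ max A B) (hγ : 0 ≤ γ) (hθ : 0 ≤ θ) :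
    A ^ (-γ) * B ^ (-θ) ≤ brokenPowerLaw c γ θ B + brokenPowerLaw c θ γ A := by
  rcases le_total B A with h | h
  · have : A ^ (-γ) ≤ max c B ^ (-γ) :=
      Real.rpow_le_rpow_of_nonpos (hB.trans_le (le_max_right c B))
        (max_le (by rwa [max_eq_left h] at hcAB) h) (neg_nonpos.2 hγ)
    exact le_add_of_le_of_nonneg (mul_le_mul_of_nonneg_right this (Real.rpow_nonneg hB.le _))
      (brokenPowerLaw_nonneg hA.le)
  · have : B ^ (-θ) ≤ max c A ^ (-θ) :=
      Real.rpow_le_rpow_of_nonpos (hA.trans_le (le_max_right c A))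
        (max_le (by rwa [max_eq_right h] at hcAB) h) (neg_nonpos.2 hθ)
    rw [show brokenPowerLaw c θ γ A = A ^ (-γ) * max c A ^ (-θ) from mul_comm _ _]
    exact le_add_of_nonneg_of_le (brokenPowerLaw_nonneg hB.le)
      (mul_le_mul_of_nonneg_left this (Real.rpow_nonneg hA.le _))

theorem lintegral_comp_add_abs_sub_le {f : ℝ → ℝ≥0∞} (hf : Measurable f) {b : ℝ} (hb : 0 ≤ b)
    (v : ℝ) : ∫⁻ x, f (b + |x - v|) ≤ 2 * ∫⁻ t in Ioi 0, f t := by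
  set g := (Ici (0 : ℝ)).indicator f with hg_def
  have hg : Measurable g := hf.indicator measurableSet_Ici
  have hsplit : ∀ x, f (b + |x - v|) ≤ g (x + (b - v)) + g ((b + v) - x) := by
    intro x
    rcases le_total v x with h | h
    · have : g (x + (b - v)) = f (b + |x - v|) := by
        rw [hg_def, indicator_of_mem (mem_Ici.2 (by linarith)) f, abs_of_nonneg (sub_nonneg.2 h)]
        congr 1; ring
      exact this ▸ le_self_add
    · have : g (b + v - x) = f (b + |x - v|) := by
        rw [hg_def, indicator_of_mem (mem_Ici.2 (by linarith)) f, abs_of_nonpos (sub_nonpos.2 h)]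
        congr 1; ring
      exact this ▸ le_add_self
  calc ∫⁻ x, f (b + |x - v|)
      ≤ ∫⁻ x, (g (x + (b - v)) + g ((b + v) - x)) := lintegral_mono hsplit
    _ = (∫⁻ x, g (x + (b - v))) + ∫⁻ x, g ((b + v) - x) :=
        lintegral_add_left (f := fun x => g (x + (b - v))) (hg.comp (measurable_add_const _)) _
    _ = 2 * ∫⁻ t in Ioi 0, f t := by
        rw [lintegral_add_right_eq_self (μ := volume) g, lintegral_sub_left_eq_self (μ := volume) g,
          hg_def, lintegral_indicator measurableSet_Ici, setLIntegral_congr Ioi_ae_eq_Ici, two_mul]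

theorem integral_le_of_lintegral_ofReal_le {α : Type*} [MeasurableSpace α] {μ : Measure α}
    {f : α → ℝ} {M : ℝ} (hf : 0 ≤ᵐ[μ] f) (hM : 0 ≤ M)
    (h : ∫⁻ a, ENNReal.ofReal (f a) ∂μ ≤ ENNReal.ofReal M) : ∫ a, f a ∂μ ≤ M :=
  calc ∫ a, f a ∂μ ≤ ‖∫ a, f a ∂μ‖ := Real.le_norm_self _
    _ ≤ (∫⁻ a, ENNReal.ofReal ‖f a‖ ∂μ).toReal := norm_integral_le_lintegral_norm f
    _ = (∫⁻ a, ENNReal.ofReal (f a) ∂μ).toReal := by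
        rw [lintegral_congr_ae (hf.mono fun a ha => by rw [Real.norm_of_nonneg ha])]
    _ ≤ M := ENNReal.toReal_le_of_le_ofReal hM h

-- `2 * (R / 2) ^ (1 - γ - θ) = 2 ^ (γ + θ) * R ^ (1 - γ - θ)` times the two profile integrals.
noncomputable def rpowConvConst (γ θ : ℝ) : ℝ :=
  2 ^ (γ + θ) * (1 / (1 - γ) + 1 / (1 - θ) + 2 / (γ + θ - 1))

theorem rpowConvConst_pos {γ θ : ℝ} (hγ : γ < 1) (hθ : θ < 1) (hγθ : 1 < γ + θ) :
    0 < rpowConvConst γ θ := by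
  have := sub_pos.2 hγ; have := sub_pos.2 hθ; have := sub_pos.2 hγθ
  unfold rpowConvConst; positivity

theorem lintegral_rpow_neg_mul_rpow_neg_le {γ θ : ℝ} (hγ : γ < 1) (hθ : θ < 1) (hγθ : 1 < γ + θ)
    {b : ℝ} (hb : 0 < b) (u v : ℝ) :
    ∫⁻ x, ENNReal.ofReal ((b + |x - u|) ^ (-γ) * (b + |x - v|) ^ (-θ)) ≤
      ENNReal.ofReal (rpowConvConst γ θ * (b + |u - v|) ^ (1 - γ - θ)) := by
  have h1γ := sub_pos.2 hγ
  have h1θ := sub_pos.2 hθ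
  have hγθ1 := sub_pos.2 hγθ
  set R := b + |u - v|
  have hR : 0 < R := by positivity
  have hc : 0 < R / 2 := by positivity
  have hpt : ∀ x, ENNReal.ofReal ((b + |x - u|) ^ (-γ) * (b + |x - v|) ^ (-θ)) ≤
      ENNReal.ofReal (brokenPowerLaw (R / 2) γ θ (b + |x - v|)) +
        ENNReal.ofReal (brokenPowerLaw (R / 2) θ γ (b + |x - u|)) := fun x => by
    have htri : |u - v| ≤ |x - u| + |x - v| := by
      rw [abs_sub_comm x u]; exact abs_sub_le u x v
    rw [← ENNReal.ofReal_add (brokenPowerLaw_nonneg (by positivity))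
      (brokenPowerLaw_nonneg (by positivity))]
    refine ENNReal.ofReal_le_ofReal (rpow_neg_mul_rpow_neg_le_brokenPowerLaw_add (by positivity)
      (by positivity) ?_ (by linarith) (by linarith))
    linarith [le_max_left (b + |x - u|) (b + |x - v|), le_max_right (b + |x - u|) (b + |x - v|)]
  calc ∫⁻ x, ENNReal.ofReal ((b + |x - u|) ^ (-γ) * (b + |x - v|) ^ (-θ))
      ≤ ∫⁻ x, (ENNReal.ofReal (brokenPowerLaw (R / 2) γ θ (b + |x - v|)) +
          ENNReal.ofReal (brokenPowerLaw (R / 2) θ γ (b + |x - u|))) := lintegral_mono hpt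
    _ = (∫⁻ x, ENNReal.ofReal (brokenPowerLaw (R / 2) γ θ (b + |x - v|))) +
          ∫⁻ x, ENNReal.ofReal (brokenPowerLaw (R / 2) θ γ (b + |x - u|)) :=
        lintegral_add_left (by fun_prop) _
    _ ≤ 2 * (∫⁻ t in Ioi 0, ENNReal.ofReal (brokenPowerLaw (R / 2) γ θ t)) +
          2 * ∫⁻ t in Ioi 0, ENNReal.ofReal (brokenPowerLaw (R / 2) θ γ t) :=
        add_le_add (lintegral_comp_add_abs_sub_le (by fun_prop) hb.le v)
          (lintegral_comp_add_abs_sub_le (by fun_prop) hb.le u)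
    _ = _ := by
        rw [lintegral_brokenPowerLaw hc hθ hγθ, lintegral_brokenPowerLaw hc hγ (by linarith),
          add_comm θ γ, ← ENNReal.ofReal_ofNat 2, ← ENNReal.ofReal_mul zero_le_two,
          ← ENNReal.ofReal_mul zero_le_two, ← ENNReal.ofReal_add (by positivity) (by positivity)]
        congr 1
        have hpow2 : (2 : ℝ) ^ (γ + θ) = 2 / 2 ^ (1 - (γ + θ)) := by
          rw [eq_div_iff (by positivity), ← Real.rpow_add two_pos, add_sub_cancel, Real.rpow_one]
        rw [rpowConvConst, Real.div_rpow hR.le zero_le_two, hpow2, sub_sub]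
        field_simp
        ring

theorem integral_rpow_neg_mul_rpow_neg_le {γ θ : ℝ} (hγ : γ < 1) (hθ : θ < 1)
    (hγθ : 1 < γ + θ) {b : ℝ} (hb : 0 < b) (u v : ℝ) :
    ∫ x, (b + |x - u|) ^ (-γ) * (b + |x - v|) ^ (-θ) ≤
      rpowConvConst γ θ * (b + |u - v|) ^ (1 - γ - θ) :=
  integral_le_of_lintegral_ofReal_le (ae_of_all _ fun x => by positivity)
    (mul_nonneg (rpowConvConst_pos hγ hθ hγθ).le (by positivity))
    (lintegral_rpow_neg_mul_rpow_neg_le hγ hθ hγθ hb u v)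

theorem setIntegral_Ioi_rpow_neg_mul_rpow_neg_le {γ θ : ℝ} (hγ : γ < 1) (hθ : θ < 1)
    (hγθ : 1 < γ + θ) {b : ℝ} (hb : 0 < b) (u : ℝ) :
    ∫ x in Ioi 0, (b + |x - u|) ^ (-γ) * (b + x) ^ (-θ) ≤
      rpowConvConst γ θ * (b + |u|) ^ (1 - γ - θ) := by
  refine integral_le_of_lintegral_ofReal_le ?_
    (mul_nonneg (rpowConvConst_pos hγ hθ hγθ).le (by positivity)) ?_
  · filter_upwards [ae_restrict_mem measurableSet_Ioi] with x (hx : 0 < x)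
    positivity
  calc ∫⁻ x in Ioi 0, ENNReal.ofReal ((b + |x - u|) ^ (-γ) * (b + x) ^ (-θ))
      = ∫⁻ x in Ioi 0, ENNReal.ofReal ((b + |x - u|) ^ (-γ) * (b + |x - 0|) ^ (-θ)) :=
        setLIntegral_congr_fun measurableSet_Ioi fun x (hx : 0 < x) => by
          rw [sub_zero, abs_of_pos hx]
    _ ≤ ∫⁻ x, ENNReal.ofReal ((b + |x - u|) ^ (-γ) * (b + |x - 0|) ^ (-θ)) :=
        setLIntegral_le_lintegral _ _
    _ ≤ ENNReal.ofReal (rpowConvConst γ θ * (b + |u|) ^ (1 - γ - θ)) := by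
        simpa only [sub_zero] using lintegral_rpow_neg_mul_rpow_neg_le hγ hθ hγθ hb u 0

/-- A useful bound on an integral: for `γ, θ ∈ (0,1)` with `γ + θ > 1` there is `C > 0`
with `∫₀^∞ (b+|x−u|)^{−γ} (b+x)^{−θ} dx ≤ C (b+|u|)^{1−γ−θ}` for all `b > 0`, `u ∈ ℝ`;
consequently there is `C' > 0` with
`∫_ℝ (b+|x−u|)^{−γ} (b+|x−v|)^{−θ} dx ≤ C' (b+|u−v|)^{1−γ−θ}` for all `b > 0`, `u, v ∈ ℝ`. -/
theorem integral_bound_rpow (γ θ : ℝ) (hγ : γ ∈ Set.Ioo (0 : ℝ) 1)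
    (hθ : θ ∈ Set.Ioo (0 : ℝ) 1) (hγθ : 1 < γ + θ) :
    (∃ C : ℝ, 0 < C ∧ ∀ b u : ℝ, 0 < b →
      (∫ x in Set.Ioi (0 : ℝ), (b + |x - u|) ^ (-γ) * (b + x) ^ (-θ)) ≤
        C * (b + |u|) ^ (1 - γ - θ)) ∧
    (∃ C' : ℝ, 0 < C' ∧ ∀ b u v : ℝ, 0 < b →
      (∫ x : ℝ, (b + |x - u|) ^ (-γ) * (b + |x - v|) ^ (-θ)) ≤
        C' * (b + |u - v|) ^ (1 - γ - θ)) := by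
  have hC := rpowConvConst_pos hγ.2 hθ.2 hγθ
  exact ⟨⟨_, hC, fun b u hb => setIntegral_Ioi_rpow_neg_mul_rpow_neg_le hγ.2 hθ.2 hγθ hb u⟩,
    ⟨_, hC, fun b u v hb => integral_rpow_neg_mul_rpow_neg_le hγ.2 hθ.2 hγθ hb u v⟩⟩
end
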